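/- arXiv:0911.4415 — 2 statements merged into one kernel-verified Lean document; each statement's English description precedes it below -/
import Mathlib

section
/- Let M be a set of natural numbers containing all terms a·rⁿ (n ∈ ℕ) of a geometric progression with a ≥ 1 and r ≥ 2. For any partition of M into two subsets, at least one subset contains three distinct elements x, y, z with y² = x·z. -/
open Classical in
lemma vdw9 : ∀ f : Fin 9 → Bool, ∃ i j k : Fin 9,
    (i : ℕ) + (k : ℕ) = 2 * (j : ℕ) ∧ i < j ∧ j < k ∧ f i = f j ∧ f j = f k := by
  set_option maxRecDepth 10000 in decide

theorem stmt_8 (M : Set ℕ) (a r : ℕ) (ha : 1 ≤ a) (hr : 2 ≤ r)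
    (hM : ∀ n : ℕ, a * r ^ n ∈ M) (M₁ M₂ : Set ℕ)
    (hpart : M₁ ∪ M₂ = M) :
    (∃ x y z : ℕ, x ∈ M₁ ∧ y ∈ M₁ ∧ z ∈ M₁ ∧ y ^ 2 = x * z ∧ x ≠ y ∧ y ≠ z ∧ x ≠ z) ∨
    (∃ x y z : ℕ, x ∈ M₂ ∧ y ∈ M₂ ∧ z ∈ M₂ ∧ y ^ 2 = x * z ∧ x ≠ y ∧ y ≠ z ∧ x ≠ z) := by
  classical
  set f : Fin 9 → Bool := fun n => if a * r ^ (n : ℕ) ∈ M₁ then true else false with hf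
  obtain ⟨i, j, k, hsum, hij, hjk, hfij, hfjk⟩ := vdw9 f
  have hmono : ∀ m n : Fin 9, m < n → a * r ^ (m : ℕ) < a * r ^ (n : ℕ) := by
    intro m n hmn
    exact Nat.mul_lt_mul_of_le_of_lt (le_refl a)
      (Nat.pow_lt_pow_right hr (Fin.lt_iff_val_lt_val.mp hmn)) ha
  have hsq : (a * r ^ (j : ℕ)) ^ 2 = (a * r ^ (i : ℕ)) * (a * r ^ (k : ℕ)) := by
    have : r ^ (i : ℕ) * r ^ (k : ℕ) = r ^ (j : ℕ) * r ^ (j : ℕ) := by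
      rw [← pow_add, ← pow_add, hsum, two_mul]
    calc (a * r ^ (j:ℕ))^2 = a * a * (r ^ (j:ℕ) * r ^ (j:ℕ)) := by ring
    _ = a * a * (r ^ (i:ℕ) * r ^ (k:ℕ)) := by rw [this]
    _ = (a * r ^ (i:ℕ)) * (a * r ^ (k:ℕ)) := by ring
  have hxy : a * r ^ (i : ℕ) ≠ a * r ^ (j : ℕ) := (hmono i j hij).ne
  have hyz : a * r ^ (j : ℕ) ≠ a * r ^ (k : ℕ) := (hmono j k hjk).ne
  have hxz : a * r ^ (i : ℕ) ≠ a * r ^ (k : ℕ) := (hmono i k (hij.trans hjk)).ne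
  by_cases h1 : a * r ^ (j : ℕ) ∈ M₁
  · have hfj : f j = true := by simp [hf, h1]
    have hfi : f i = true := hfij.trans hfj
    have hfk : f k = true := (hfjk.symm.trans hfj)
    have mi : a * r ^ (i : ℕ) ∈ M₁ := by by_contra h; simp [hf, h] at hfi
    have mk : a * r ^ (k : ℕ) ∈ M₁ := by by_contra h; simp [hf, h] at hfk
    exact Or.inl ⟨_, _, _, mi, h1, mk, hsq, hxy, hyz, hxz⟩
  · have hfj : f j = false := by simp [hf, h1]
    have hfi : f i = false := hfij.trans hfj
    have hfk : f k = false := hfjk.symm.trans hfj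
    have m2 : ∀ n : Fin 9, f n = false → a * r ^ (n : ℕ) ∈ M₂ := by
      intro n hn
      have hnot : a * r ^ (n : ℕ) ∉ M₁ := by
        intro h; simp [hf, h] at hn
      have : a * r ^ (n : ℕ) ∈ M₁ ∪ M₂ := hpart ▸ hM (n : ℕ)
      exact this.resolve_left hnot
    exact Or.inr ⟨_, _, _, m2 i hfi, m2 j hfj, m2 k hfk, hsq, hxy, hyz, hxz⟩
end

section
/- Fix m ≥ 1 and let A = {nᵐ : n ≥ 1}. For any partition of A into two subsets, at least one subset contains infinitely many triples of distinct elements in geometric progression; precisely, the set of pairs (x, d) such that x, x·d, x·d² (d ≥ 2) all lie in that subset is infinite. -/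
/-!
Colour the exponent `k` by the part containing `(2 ^ m) ^ k = (2 ^ k) ^ m`. Van der Waerden's
theorem, applied beyond any given bound, yields infinitely many monochromatic arithmetic progressions
`a, a + d, a + 2d` of exponents, and `q ^ a, q ^ a * q ^ d, q ^ a * (q ^ d) ^ 2` with `q = 2 ^ m` is
then a geometric progression in one part.
-/

open Set

def threeAPs (A : Set ℕ) : Set (ℕ × ℕ) :=
  {p | 0 < p.2 ∧ p.1 ∈ A ∧ p.1 + p.2 ∈ A ∧ p.1 + 2 * p.2 ∈ A}

def geomTriples (M : Set ℕ) : Set (ℕ × ℕ) :=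
  {p | 2 ≤ p.2 ∧ p.1 ∈ M ∧ p.1 * p.2 ∈ M ∧ p.1 * p.2 ^ 2 ∈ M}

theorem exists_mono_threeAP_ge {κ : Type*} [Finite κ] (C : ℕ → κ) (N : ℕ) :
    ∃ a ≥ N, ∃ d > 0, C (a + d) = C a ∧ C (a + 2 * d) = C a := by
  obtain ⟨d, hd, b, c, hc⟩ :=
    Combinatorics.exists_mono_homothetic_copy ({0, 1, 2} : Finset ℕ) (fun k => C (N + k))
  have h0 := hc 0 (by simp)
  have h1 := hc 1 (by simp)
  have h2 := hc 2 (by simp)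
  simp only [smul_eq_mul, mul_zero, mul_one, zero_add] at h0 h1 h2
  refine ⟨N + b, Nat.le_add_right N b, d, hd, ?_, ?_⟩
  · rw [h0, ← h1, add_comm d b, add_assoc]
  · rw [h0, ← h2, mul_comm d 2, add_comm (2 * d) b, add_assoc]

theorem threeAPs_infinite_or_of_union_eq_univ {A B : Set ℕ} (hAB : A ∪ B = univ) :
    (threeAPs A).Infinite ∨ (threeAPs B).Infinite := by
  by_contra! hfin
  obtain ⟨N, hN⟩ := ((hfin.1.union hfin.2).image Prod.fst).bddAbove
  obtain ⟨a, ha, d, hd, h1, h2⟩ := exists_mono_threeAP_ge (· ∈ A) (N + 1)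
  have hbound : (a, d) ∈ threeAPs A ∪ threeAPs B → False := fun h =>
    absurd (hN (mem_image_of_mem Prod.fst h)) (by simp only; omega)
  have hB : ∀ k, k ∉ A → k ∈ B := fun k hk =>
    (eq_univ_iff_forall.mp hAB k).resolve_left hk
  by_cases hA : a ∈ A
  · exact hbound (Or.inl ⟨hd, hA, h1 ▸ hA, h2 ▸ hA⟩)
  · exact hbound (Or.inr ⟨hd, hB _ hA, hB _ (h1 ▸ hA), hB _ (h2 ▸ hA)⟩)

theorem mapsTo_threeAPs_geomTriples {q : ℕ} (hq : 2 ≤ q) (M : Set ℕ) :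
    MapsTo (fun p : ℕ × ℕ => (q ^ p.1, q ^ p.2)) (threeAPs {k | q ^ k ∈ M}) (geomTriples M) := by
  rintro ⟨a, d⟩ ⟨hd, ha, (had : q ^ (a + d) ∈ M), (ha2d : q ^ (a + 2 * d) ∈ M)⟩
  refine ⟨le_trans hq (Nat.le_self_pow hd.ne' q), ha, ?_, ?_⟩
  · simpa only [← pow_add] using had
  · simpa only [← pow_mul, ← pow_add, mul_comm d 2] using ha2d

theorem geomTriples_infinite {q : ℕ} (hq : 2 ≤ q) {M : Set ℕ}
    (h : (threeAPs {k | q ^ k ∈ M}).Infinite) : (geomTriples M).Infinite := by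
  have hinj : Function.Injective (fun p : ℕ × ℕ => (q ^ p.1, q ^ p.2)) :=
    (Nat.pow_right_injective hq).prodMap (Nat.pow_right_injective hq)
  exact (h.image hinj.injOn).mono (mapsTo_threeAPs_geomTriples hq M).image_subset

theorem stmt_10 (m : ℕ) (hm : 1 ≤ m) (M₁ M₂ : Set ℕ)
    (hpart : M₁ ∪ M₂ = {x : ℕ | ∃ n : ℕ, 1 ≤ n ∧ x = n ^ m}) :
    {p : ℕ × ℕ | 2 ≤ p.2 ∧ p.1 ∈ M₁ ∧ p.1 * p.2 ∈ M₁ ∧ p.1 * p.2 ^ 2 ∈ M₁}.Infinite ∨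
    {p : ℕ × ℕ | 2 ≤ p.2 ∧ p.1 ∈ M₂ ∧ p.1 * p.2 ∈ M₂ ∧ p.1 * p.2 ^ 2 ∈ M₂}.Infinite := by
  have hq : 2 ≤ 2 ^ m := by simpa using Nat.pow_le_pow_right two_pos hm
  have hcover : {k | (2 ^ m) ^ k ∈ M₁} ∪ {k | (2 ^ m) ^ k ∈ M₂} = univ := by
    refine eq_univ_of_forall fun k => (?_ : (2 ^ m) ^ k ∈ M₁ ∪ M₂)
    rw [hpart, ← pow_mul, mul_comm, pow_mul]
    exact ⟨2 ^ k, Nat.one_le_two_pow, rfl⟩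
  exact (threeAPs_infinite_or_of_union_eq_univ hcover).imp
    (geomTriples_infinite hq) (geomTriples_infinite hq)
end
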